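/- arXiv:2210.12821 — 3 statements merged into one kernel-verified Lean document; each statement's English description precedes it below -/
import Mathlib

section
/- Let q = 2^(2m+1) with m ≥ 1. Then there is no β ∈ F_q for which the cubic polynomial t³ + βt² + 1 has exactly two roots in F_q, and there are exactly q/2 elements β ∈ F_q for which it has exactly one root in F_q. -/
/-!
Write `k β` for the number of roots of `t ^ 3 + β * t ^ 2 + 1`. A root `t` is nonzero and
determines `β = -(t ^ 3 + 1) / t ^ 2`, so `∑ β, k β = q - 1`. In characteristic 2 a cubic with two
roots has a third, distinct one (Vieta, and `β` is never a root), so `k β ∈ {0, 1, 3}`.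
Substituting `b = y / t ^ 2` shows that the cubic attached to a nonzero `t` has
`1 + #{y | y ^ 2 + y = t ^ 3}` roots; as cubing permutes `F` (`3 ∤ q - 1` for an odd power of 2),
`∑ β, k β ^ 2 = ∑ t ≠ 0, k (-(t ^ 3 + 1) / t ^ 2) = (q - 2) + (q - 1)`. The numbers `N₁`, `N₃` of
`β` with one and three roots thus satisfy `N₁ + 3 N₃ = q - 1` and `N₁ + 9 N₃ = 2 q - 3`, whence
`N₁ = q / 2`.
-/

open Finset

theorem Nat.coprime_two_pow_odd_sub_one_three (m : ℕ) : (2 ^ (2 * m + 1) - 1).Coprime 3 := by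
  rw [Nat.coprime_comm, Nat.Prime.coprime_iff_not_dvd Nat.prime_three]
  have : 2 ^ (2 * m + 1) % 3 = 2 := by
    rw [pow_succ, pow_mul, Nat.mul_mod, Nat.pow_mod]
    norm_num
  generalize 2 ^ (2 * m + 1) = q at this
  omega

theorem sum_comp_of_forall_eq_zero_or_one_or_three {ι : Type*} [Fintype ι] {k : ι → ℕ}
    (hk : ∀ i, k i = 0 ∨ k i = 1 ∨ k i = 3) {f : ℕ → ℕ} (hf : f 0 = 0) :
    ∑ i, f (k i) = #{i | k i = 1} * f 1 + #{i | k i = 3} * f 3 := by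
  have split : ∀ i, f (k i) = (if k i = 1 then f 1 else 0) + (if k i = 3 then f 3 else 0) := by
    intro i
    rcases hk i with h | h | h <;> simp [h, hf]
  simp only [split, sum_add_distrib, sum_ite, sum_const_zero, add_zero, sum_const, smul_eq_mul]

section FiniteField

variable {F : Type*} [Field F] [Fintype F]

theorem charP_two_of_card_eq_two_pow {n : ℕ} (hn : n ≠ 0) (hcard : Fintype.card F = 2 ^ n) :
    CharP F 2 := by
  have h := FiniteField.cast_card_eq_zero F
  rw [hcard, Nat.cast_pow, Nat.cast_ofNat] at h
  exact CharTwo.of_one_ne_zero_of_two_eq_zero one_ne_zero ((pow_eq_zero_iff hn).1 h)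

theorem FiniteField.pow_bijective_of_coprime {n : ℕ} (hn : n ≠ 0)
    (hcop : (Fintype.card F - 1).Coprime n) : Function.Bijective fun x : F => x ^ n := by
  refine Finite.injective_iff_bijective.1 fun a b (hab : a ^ n = b ^ n) => ?_
  rcases eq_or_ne a 0 with rfl | ha
  · exact ((pow_eq_zero_iff hn).1 (hab.symm.trans (zero_pow hn))).symm
  rcases eq_or_ne b 0 with rfl | hb
  · exact (pow_eq_zero_iff hn).1 (hab.trans (zero_pow hn))
  have hunits : (Nat.card Fˣ).Coprime n := by rwa [Nat.card_units, Nat.card_eq_fintype_card]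
  have := hunits.pow_left_bijective.1 (a₁ := Units.mk0 a ha) (a₂ := Units.mk0 b hb)
    (Units.ext (by simpa using hab))
  simpa using congrArg Units.val this

variable [DecidableEq F]

theorem sum_card_sq_add_self_eq_pow_three (hcube : Function.Bijective fun x : F => x ^ 3) :
    ∑ t ∈ univ.erase (0 : F), #{y | y ^ 2 + y = t ^ 3} = Fintype.card F - 2 := by
  have hzero : #{y : F | y ^ 2 + y = 0} = 2 := by
    rw [card_eq_two]
    refine ⟨0, -1, by simp, ?_⟩
    ext y
    simp only [mem_filter, mem_univ, true_and, mem_insert, mem_singleton]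
    rw [show y ^ 2 + y = y * (y + 1) by ring, mul_eq_zero, add_eq_zero_iff_eq_neg]
  have htotal := card_eq_sum_card_fiberwise (f := fun y : F => y ^ 2 + y) (s := univ)
    (t := (univ : Finset F)) (fun _ _ => mem_univ _)
  rw [← add_sum_erase _ _ (mem_univ 0), card_univ, hzero] at htotal
  have hreindex : ∑ t ∈ univ.erase (0 : F), #{y | y ^ 2 + y = t ^ 3}
      = ∑ u ∈ univ.erase (0 : F), #{y | y ^ 2 + y = u} :=
    sum_nbij (· ^ 3) (fun t ht => ?_) hcube.1.injOn ?_ (fun _ _ => rfl)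
  · omega
  · simpa using ht
  · intro u hu
    obtain ⟨t, rfl⟩ := hcube.2 u
    exact ⟨t, by simpa using hu, rfl⟩

def cubicRoots (β : F) : Finset F := {t | t ^ 3 + β * t ^ 2 + 1 = 0}

theorem mem_cubicRoots {β t : F} : t ∈ cubicRoots β ↔ t ^ 3 + β * t ^ 2 + 1 = 0 := by
  simp [cubicRoots]

theorem ncard_setOf_eq_card_cubicRoots (β : F) :
    ({t : F | t ^ 3 + β * t ^ 2 + 1 = 0} : Set F).ncard = #(cubicRoots β) := by
  rw [← Set.ncard_coe_finset]
  congr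
  ext
  simp [cubicRoots]

theorem mem_cubicRoots_iff_eq_div {β t : F} :
    t ∈ cubicRoots β ↔ t ≠ 0 ∧ β = -(t ^ 3 + 1) / t ^ 2 := by
  rw [mem_cubicRoots]
  by_cases ht : t = 0
  · simp [ht]
  · rw [eq_div_iff (pow_ne_zero 2 ht)]
    exact ⟨fun h => ⟨ht, by linear_combination h⟩, fun h => by linear_combination h.2⟩

theorem sum_card_cubicRoots_mul (h : F → ℕ) :
    ∑ β, #(cubicRoots β) * h β = ∑ t ∈ univ.erase 0, h (-(t ^ 3 + 1) / t ^ 2) := by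
  calc ∑ β, #(cubicRoots β) * h β = ∑ β, ∑ t, if t ∈ cubicRoots β then h β else 0 := by
        simp only [card_eq_sum_ones, sum_mul, one_mul, sum_ite_mem, univ_inter]
    _ = ∑ t, if t = 0 then 0 else h (-(t ^ 3 + 1) / t ^ 2) := by
        rw [sum_comm]
        refine sum_congr rfl fun t _ => ?_
        by_cases ht : t = 0 <;> simp [mem_cubicRoots_iff_eq_div, ht]
    _ = ∑ t ∈ univ.erase 0, h (-(t ^ 3 + 1) / t ^ 2) := by
        rw [sum_ite, sum_const_zero, zero_add, filter_ne']

theorem mem_cubicRoots_iff_of_ne {a b β t : F} (hab : a ≠ b) (ha : a ∈ cubicRoots β)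
    (hb : b ∈ cubicRoots β) : t ∈ cubicRoots β ↔ t = a ∨ t = b ∨ t = -(β + a + b) := by
  rw [mem_cubicRoots] at ha hb ⊢
  set L := (β + a + b) * (a + b) - a * b
  set M := 1 - a * b * (β + a + b)
  have hLa : L * a + M = 0 := by linear_combination ha
  have hLb : L * b + M = 0 := by linear_combination hb
  have hL : L = 0 := by
    have : L * (a - b) = 0 := by linear_combination hLa - hLb
    exact (mul_eq_zero.1 this).resolve_right (sub_ne_zero.2 hab)
  have hM : M = 0 := by linear_combination hLa - a * hL
  have factor : t ^ 3 + β * t ^ 2 + 1 = (t - a) * (t - b) * (t + (β + a + b)) := by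
    linear_combination hL * t + hM
  rw [factor]
  simp only [mul_eq_zero, sub_eq_zero, add_eq_zero_iff_eq_neg, or_assoc]

section CharTwo

variable [CharP F 2]

theorem ne_of_mem_cubicRoots {β t : F} (h : t ∈ cubicRoots β) : t ≠ β := by
  rintro rfl
  rw [mem_cubicRoots] at h
  exact one_ne_zero (by linear_combination h - t ^ 3 * CharTwo.two_eq_zero (R := F))

theorem card_cubicRoots_of_ne {a b β : F} (hab : a ≠ b) (ha : a ∈ cubicRoots β)
    (hb : b ∈ cubicRoots β) : #(cubicRoots β) = 3 := by
  have h2 : (2 : F) = 0 := CharTwo.two_eq_zero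
  rw [card_eq_three]
  refine ⟨a, b, -(β + a + b), hab, fun h => ?_, fun h => ?_, ?_⟩
  · exact ne_of_mem_cubicRoots hb (by linear_combination -h + (a + b) * h2)
  · exact ne_of_mem_cubicRoots ha (by linear_combination -h + (a + b) * h2)
  · ext t
    simp only [mem_cubicRoots_iff_of_ne hab ha hb, mem_insert, mem_singleton]

theorem card_cubicRoots_eq_zero_or_one_or_three (β : F) :
    #(cubicRoots β) = 0 ∨ #(cubicRoots β) = 1 ∨ #(cubicRoots β) = 3 := by
  rcases lt_or_ge #(cubicRoots β) 2 with h | h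
  · omega
  · obtain ⟨a, ha, b, hb, hab⟩ := one_lt_card.1 h
    exact Or.inr (Or.inr (card_cubicRoots_of_ne hab ha hb))

theorem card_cubicRoots_neg_div {t : F} (ht : t ≠ 0) :
    #(cubicRoots (-(t ^ 3 + 1) / t ^ 2)) = #{y | y ^ 2 + y = t ^ 3} + 1 := by
  have h2 : (2 : F) = 0 := CharTwo.two_eq_zero
  set β := -(t ^ 3 + 1) / t ^ 2
  have hβ : β * t ^ 2 = -(t ^ 3 + 1) := div_mul_cancel₀ _ (pow_ne_zero 2 ht)
  have hmem : ∀ b, b ∈ cubicRoots β ↔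
      b * t ^ 2 ∈ insert (t ^ 3) ({y | y ^ 2 + y = t ^ 3} : Finset F) := by
    intro b
    have key : t ^ 6 * (b ^ 3 + β * b ^ 2 + 1)
        = (b * t ^ 2 + t ^ 3) * ((b * t ^ 2) ^ 2 + b * t ^ 2 + t ^ 3) := by
      linear_combination (b ^ 2 * t ^ 4) * hβ - (t ^ 4 * b ^ 2 + t ^ 5 * b + t ^ 7 * b ^ 2) * h2
    rw [mem_cubicRoots, ← mul_right_inj' (pow_ne_zero 6 ht), mul_zero, key, mul_eq_zero]
    simp only [mem_insert, mem_filter, mem_univ, true_and, CharTwo.add_eq_zero]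
  have hnot : t ^ 3 ∉ ({y | y ^ 2 + y = t ^ 3} : Finset F) := by
    simp only [mem_filter, mem_univ, true_and]
    intro h
    exact pow_ne_zero 6 ht (by linear_combination h)
  rw [← card_insert_of_notMem hnot]
  exact card_nbij' (· * t ^ 2) (· / t ^ 2)
    (fun b hb => by simpa only [mem_coe] using (hmem b).1 hb)
    (fun y hy => (hmem _).2 (by rw [div_mul_cancel₀ _ (pow_ne_zero 2 ht)]; exact mem_coe.1 hy))
    (fun b _ => mul_div_cancel_right₀ _ (pow_ne_zero 2 ht))
    (fun y _ => div_mul_cancel₀ _ (pow_ne_zero 2 ht))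

end CharTwo

end FiniteField

theorem stmt3_general (m : ℕ) (F : Type*) [Field F] [Fintype F]
    (hcard : Fintype.card F = 2 ^ (2 * m + 1)) :
    ({β : F | ({t : F | t ^ 3 + β * t ^ 2 + 1 = 0} : Set F).ncard = 2} : Set F).ncard = 0 ∧
    ({β : F | ({t : F | t ^ 3 + β * t ^ 2 + 1 = 0} : Set F).ncard = 1} : Set F).ncard
      = 2 ^ (2 * m + 1) / 2 := by
  classical
  have := charP_two_of_card_eq_two_pow (by omega) hcard
  have hcube : Function.Bijective fun x : F => x ^ 3 :=
    FiniteField.pow_bijective_of_coprime three_ne_zero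
      (hcard ▸ Nat.coprime_two_pow_odd_sub_one_three m)
  have hk := card_cubicRoots_eq_zero_or_one_or_three (F := F)
  have hsum := sum_card_cubicRoots_mul (F := F) fun _ => 1
  have hsq := sum_card_cubicRoots_mul (F := F) fun β => #(cubicRoots β)
  rw [sum_congr rfl fun t ht => card_cubicRoots_neg_div (ne_of_mem_erase ht), sum_add_distrib,
    sum_card_sq_add_self_eq_pow_three hcube] at hsq
  rw [sum_comp_of_forall_eq_zero_or_one_or_three hk (f := fun n => n * 1) rfl] at hsum
  rw [sum_comp_of_forall_eq_zero_or_one_or_three hk (f := fun n => n * n) rfl] at hsq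
  simp only [mul_one, sum_const, card_erase_of_mem (mem_univ _), card_univ, smul_eq_mul] at hsum hsq
  have hq : 2 ≤ Fintype.card F := Fintype.one_lt_card
  simp only [ncard_setOf_eq_card_cubicRoots]
  simp only [Set.ncard_eq_toFinset_card', Set.toFinset_ofPred]
  refine ⟨?_, by omega⟩
  rw [card_eq_zero, filter_eq_empty_iff]
  intro β _
  rcases hk β with h | h | h <;> omega

/-- Let `q = 2^(2m+1)` with `m ≥ 1`. Then there is no `β ∈ F_q` for which
`t³ + βt² + 1` has exactly two roots in `F_q`, and there are exactly `q/2` elements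
`β ∈ F_q` for which it has exactly one root in `F_q`. -/
theorem stmt3 (m : ℕ) (hm : 1 ≤ m) (F : Type*) [Field F] [Fintype F]
    (hcard : Fintype.card F = 2 ^ (2 * m + 1)) :
    ({β : F | ({t : F | t ^ 3 + β * t ^ 2 + 1 = 0} : Set F).ncard = 2} : Set F).ncard = 0 ∧
    ({β : F | ({t : F | t ^ 3 + β * t ^ 2 + 1 = 0} : Set F).ncard = 1} : Set F).ncard
      = 2 ^ (2 * m + 1) / 2 :=
  stmt3_general m F hcard
end

section
/- Let q ≥ 5 be an odd prime power not divisible by 3. The number of osculating planes of the twisted cubic (among the q+1 planes π_osc(t), t ∈ F_q ∪ {∞}) that contain the point spanned by (1,0,1,0) equals 1 if q ≡ -1 (mod 3) and equals 3 if q ≡ 1 (mod 3). -/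
/-!
The point `P = ⟨(1,0,1,0)⟩` lies on `π_osc(∞)`, and on `π_osc(t)` exactly when `3t² + 1 = 0`;
as `3 ≠ 0`, distinct parameters give distinct planes, so the count is `1 + #{t | 3t² + 1 = 0}`.
Substituting `ω = (3t - 1)/2` turns `3t² + 1 = 0` into `ω² + ω + 1 = 0`, i.e. `ω` has order `3`
in `F_qˣ`, which by Lagrange and Cauchy happens iff `3 ∣ q - 1`. When a root `t` exists, the
roots are `±t`, which are distinct because `q` is odd.
-/

/-- The osculating plane `π_osc(t)` of the twisted cubic, as a subset of `F_q⁴`: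
for `t ∈ F_q` it is `{x | x₀ - 3t·x₁ + 3t²·x₂ - t³·x₃ = 0}`, and
`π_osc(∞)` is `{x | x₃ = 0}`. -/
def oscSet {F : Type*} [Field F] : Option F → Set (Fin 4 → F)
  | none => {x | x 3 = 0}
  | some t => {x | x 0 - 3 * t * x 1 + 3 * t ^ 2 * x 2 - t ^ 3 * x 3 = 0}

theorem exists_orderOf_eq_prime_iff {G : Type*} [Group G] [Fintype G] {p : ℕ} [Fact p.Prime] :
    (∃ g : G, orderOf g = p) ↔ p ∣ Fintype.card G :=
  ⟨fun ⟨_, hg⟩ => hg ▸ orderOf_dvd_card, exists_prime_orderOf_dvd_card p⟩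

theorem natCast_ne_zero_of_not_dvd_card {F : Type*} [Field F] [Fintype F] {p : ℕ}
    (hp : p.Prime) (hpF : ¬ p ∣ Fintype.card F) : (p : F) ≠ 0 := by
  intro h
  have hchar : ringChar F ∣ p := (ringChar.spec F p).1 h
  obtain hone | hp_eq := hp.eq_one_or_self_of_dvd _ hchar
  · exact CharP.ringChar_ne_one hone
  · exact hpF (hp_eq ▸ (ringChar.spec F _).1 (FiniteField.cast_card_eq_zero F))

section Field

variable {F : Type*} [Field F]

theorem Units.orderOf_eq_three_iff (h3 : (3 : F) ≠ 0) (u : Fˣ) :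
    orderOf u = 3 ↔ (u : F) ^ 2 + u + 1 = 0 := by
  have : Fact (Nat.Prime 3) := ⟨Nat.prime_three⟩
  rw [orderOf_eq_prime_iff, Ne, Units.ext_iff, Units.ext_iff, Units.val_pow_eq_pow_val,
    Units.val_one]
  constructor
  · rintro ⟨hcube, hne⟩
    have hfactor : ((u : F) - 1) * ((u : F) ^ 2 + u + 1) = 0 := by linear_combination hcube
    exact (mul_eq_zero.1 hfactor).resolve_left (sub_ne_zero.2 hne)
  · intro hω
    refine ⟨by linear_combination ((u : F) - 1) * hω, fun hone => h3 ?_⟩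
    rw [hone] at hω
    linear_combination hω

theorem exists_three_mul_sq_add_one_eq_zero_iff (h2 : (2 : F) ≠ 0) (h3 : (3 : F) ≠ 0) :
    (∃ t : F, 3 * t ^ 2 + 1 = 0) ↔ ∃ u : Fˣ, orderOf u = 3 := by
  simp only [Units.orderOf_eq_three_iff h3]
  constructor
  · rintro ⟨t, ht⟩
    have hω : ((3 * t - 1) / 2) ^ 2 + (3 * t - 1) / 2 + 1 = 0 := by
      field_simp
      linear_combination 3 * ht
    have hω0 : (3 * t - 1) / 2 ≠ 0 := fun h => by simp [h] at hω
    exact ⟨Units.mk0 _ hω0, hω⟩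
  · rintro ⟨u, hu⟩
    refine ⟨(2 * u + 1) / 3, ?_⟩
    field_simp
    linear_combination 4 * hu

theorem setOf_mul_sq_add_eq_zero {a c t : F} (ha : a ≠ 0) (ht : a * t ^ 2 + c = 0) :
    {s : F | a * s ^ 2 + c = 0} = {t, -t} := by
  ext s
  have key : a * s ^ 2 + c = 0 ↔ s ^ 2 = t ^ 2 := by
    rw [← sub_eq_zero (a := s ^ 2)]
    constructor
    · intro h
      exact (mul_eq_zero.1 (by linear_combination h - ht : a * (s ^ 2 - t ^ 2) = 0)).resolve_left ha
    · intro h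
      linear_combination a * h + ht
  rw [Set.mem_ofPred_eq, key, sq_eq_sq_iff_eq_or_eq_neg]
  rfl

theorem ncard_setOf_three_mul_sq_add_one_eq_zero [Fintype F] (h2 : (2 : F) ≠ 0)
    (h3 : (3 : F) ≠ 0) :
    {t : F | 3 * t ^ 2 + 1 = 0}.ncard = if 3 ∣ Fintype.card F - 1 then 2 else 0 := by
  classical
  have : Fact (Nat.Prime 3) := ⟨Nat.prime_three⟩
  have hroot_iff : (∃ t : F, 3 * t ^ 2 + 1 = 0) ↔ 3 ∣ Fintype.card F - 1 := by
    rw [exists_three_mul_sq_add_one_eq_zero_iff h2 h3, exists_orderOf_eq_prime_iff,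
      Fintype.card_units]
  by_cases hroot : ∃ t : F, 3 * t ^ 2 + 1 = 0
  · rw [if_pos (hroot_iff.1 hroot)]
    obtain ⟨t, ht⟩ := hroot
    have ht0 : t ≠ 0 := fun h => by simp [h] at ht
    have hneg : t ≠ -t := fun h => ht0 <| (mul_eq_zero.1 (by linear_combination h :
      2 * t = 0)).resolve_left h2
    rw [setOf_mul_sq_add_eq_zero h3 ht, Set.ncard_pair hneg]
  · rw [if_neg (mt hroot_iff.2 hroot), Set.ncard_eq_zero]
    exact Set.eq_empty_of_forall_notMem fun t ht => hroot ⟨t, ht⟩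

theorem oscSet_injective (h3 : (3 : F) ≠ 0) : Function.Injective (oscSet (F := F)) := by
  have hpoint (t : F) : ![t ^ 3, 0, 0, 1] ∈ oscSet (some t) := by simp [oscSet]
  rintro (_ | t) (_ | t') h
  · rfl
  · have hmem := hpoint t'
    rw [← h] at hmem
    simp [oscSet] at hmem
  · have hmem := hpoint t
    rw [h] at hmem
    simp [oscSet] at hmem
  · have hmem : ![3 * t, 1, 0, 0] ∈ oscSet (some t') := h ▸ by simp [oscSet]
    change 3 * t - 3 * t' * 1 + 3 * t' ^ 2 * 0 - t' ^ 3 * 0 = 0 at hmem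
    exact congrArg some (sub_eq_zero.1 <| (mul_eq_zero.1 (by linear_combination hmem :
      3 * (t - t') = 0)).resolve_left h3)

theorem span_singleton_subset_oscSet_iff (v : Fin 4 → F) (τ : Option F) :
    ((Submodule.span F {v} : Submodule F (Fin 4 → F)) : Set (Fin 4 → F)) ⊆ oscSet τ ↔
      v ∈ oscSet τ := by
  refine ⟨fun h => h (Submodule.mem_span_singleton_self v), fun hv x hx => ?_⟩
  obtain ⟨c, rfl⟩ := Submodule.mem_span_singleton.1 hx
  cases τ <;> simp only [oscSet, Set.mem_ofPred_eq, Pi.smul_apply, smul_eq_mul] at hv ⊢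
  · rw [hv, mul_zero]
  · linear_combination c * hv

theorem mem_oscSet_some_iff (t : F) : ![1, 0, 1, 0] ∈ oscSet (some t) ↔ 3 * t ^ 2 + 1 = 0 := by
  change (1 : F) - 3 * t * 0 + 3 * t ^ 2 * 1 - t ^ 3 * 0 = 0 ↔ _
  constructor <;> intro h <;> linear_combination h

theorem ncard_oscSet_superset_span_eq [Finite F] (h3 : (3 : F) ≠ 0) :
    Set.ncard {π : Set (Fin 4 → F) | (∃ τ : Option F, π = oscSet τ) ∧
      ((Submodule.span F {![1, 0, 1, 0]} : Submodule F (Fin 4 → F)) : Set (Fin 4 → F)) ⊆ π} =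
      {t : F | 3 * t ^ 2 + 1 = 0}.ncard + 1 := by
  have himage : {π : Set (Fin 4 → F) | (∃ τ : Option F, π = oscSet τ) ∧
      ((Submodule.span F {![1, 0, 1, 0]} : Submodule F (Fin 4 → F)) : Set (Fin 4 → F)) ⊆ π} =
      oscSet '' insert none (some '' {t : F | 3 * t ^ 2 + 1 = 0}) := by
    ext π
    constructor
    · rintro ⟨⟨τ, rfl⟩, hsub⟩
      refine ⟨τ, ?_, rfl⟩
      rw [span_singleton_subset_oscSet_iff] at hsub
      cases τ
      · exact Set.mem_insert _ _
      · exact Or.inr ⟨_, (mem_oscSet_some_iff _).1 hsub, rfl⟩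
    · rintro ⟨τ, hτ, rfl⟩
      refine ⟨⟨τ, rfl⟩, (span_singleton_subset_oscSet_iff _ _).2 ?_⟩
      rcases hτ with rfl | ⟨t, ht, rfl⟩
      · simp [oscSet]
      · exact (mem_oscSet_some_iff t).2 ht
  rw [himage, Set.ncard_image_of_injective _ (oscSet_injective h3),
    Set.ncard_insert_of_notMem (by simp),
    Set.ncard_image_of_injective _ (Option.some_injective F)]

end Field

theorem stmt8_general (q : ℕ) (hodd : Odd q) (h3 : ¬ (3 ∣ q))
    (F : Type*) [Field F] [Fintype F] (hcard : Fintype.card F = q) :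
    let n : ℕ := Set.ncard {π : Set (Fin 4 → F) | (∃ τ : Option F, π = oscSet τ) ∧
      ((Submodule.span F {![1, 0, 1, 0]} : Submodule F (Fin 4 → F)) : Set (Fin 4 → F)) ⊆ π}
    (q % 3 = 2 → n = 1) ∧ (q % 3 = 1 → n = 3) := by
  intro n
  subst hcard
  have two_ne_zero : (2 : F) ≠ 0 := by
    exact_mod_cast natCast_ne_zero_of_not_dvd_card Nat.prime_two hodd.not_two_dvd_nat
  have three_ne_zero : (3 : F) ≠ 0 := by
    exact_mod_cast natCast_ne_zero_of_not_dvd_card Nat.prime_three h3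
  have hn : n = (if 3 ∣ Fintype.card F - 1 then 2 else 0) + 1 := by
    rw [← ncard_setOf_three_mul_sq_add_one_eq_zero two_ne_zero three_ne_zero]
    exact ncard_oscSet_superset_span_eq three_ne_zero
  refine ⟨fun hq => ?_, fun hq => ?_⟩
  · rw [hn, if_neg (by omega)]
  · rw [hn, if_pos (by omega)]

/-- Let `q ≥ 5` be an odd prime power not divisible by `3`. The number of
osculating planes of the twisted cubic (among the `q+1` planes `π_osc(t)`,
`t ∈ F_q ∪ {∞}`) containing the point spanned by `(1,0,1,0)` equals `1` if
`q ≡ -1 (mod 3)` and equals `3` if `q ≡ 1 (mod 3)`. -/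
theorem stmt8 (q : ℕ) (hq5 : 5 ≤ q) (hodd : Odd q) (h3 : ¬ (3 ∣ q))
    (F : Type*) [Field F] [Fintype F] (hcard : Fintype.card F = q) :
    let n : ℕ := Set.ncard {π : Set (Fin 4 → F) | (∃ τ : Option F, π = oscSet τ) ∧
      ((Submodule.span F {![1, 0, 1, 0]} : Submodule F (Fin 4 → F)) : Set (Fin 4 → F)) ⊆ π}
    (q % 3 = 2 → n = 1) ∧ (q % 3 = 1 → n = 3) :=
  stmt8_general q hodd h3 F hcard
end

section
/- Let q ≥ 9 be a power of 3 and μ ∈ F_q^* with μ ≠ 1. Then the number of c ∈ F_q^* such that the cubic t³ + ct² - t - μc has exactly one root in F_q equals the number of c ∈ F_q^* such that μc⁴ + c² + 1 ≠ 0 and η( c⁴ / (μc⁴ + c² + 1) ) = -1. -/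
open scoped Classical

/-- The quadratic character of a field: `η a = 1` if `a` is a nonzero square,
`η a = -1` if `a` is a non-square, and `η 0 = 0`. -/
noncomputable def quadChar (F : Type*) [Field F] (a : F) : ℤ :=
  if a = 0 then 0 else if IsSquare a then 1 else -1

/-!
Fix `c ≠ 0` and put `D = μc⁴ + c² + 1`. In characteristic 3 the substitution `t = 1/z - 1/c`
turns `c³z³ (t³ + ct² - t - μc)` into `c³ + c⁴z - Dz³`. If `D ≠ 0`, no root is `t = -1/c`, so the
roots `t` correspond bijectively to the solutions of `Dz³ - c⁴z = c³`. The map `z ↦ Dz³ - c⁴z` is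
additive, by the Frobenius, with kernel `{0}` or `{0, ±s}` according as `c⁴/D` is a non-square or
equals `s²`; so the equation has exactly one solution iff `c⁴/D` is a non-square, and otherwise `0`
or `3`. If `D = 0` the cubic is `(t + 1/c)² (t + c + 1/c)`, with two roots.
-/

theorem quadChar_eq_neg_one_iff {F : Type*} [Field F] (a : F) :
    quadChar F a = -1 ↔ ¬IsSquare a := by
  unfold quadChar
  split_ifs with h0 h <;> simp_all

section CubicSubLinear

variable {F : Type*} [Field F] [CharP F 3] {a b : F}

theorem cubic_sub_linear_add (z w : F) :
    a * (z + w) ^ 3 - b * (z + w) = (a * z ^ 3 - b * z) + (a * w ^ 3 - b * w) := by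
  rw [add_pow_char]; ring

theorem cubic_sub_linear_injective (ha : a ≠ 0) (hsq : ¬IsSquare (b / a)) :
    Function.Injective fun z : F => a * z ^ 3 - b * z := by
  intro z w h
  have hzero : (z - w) * (a * (z - w) ^ 2 - b) = 0 := by
    have := cubic_sub_linear_add (a := a) (b := b) (z - w) w
    simp only [sub_add_cancel] at this
    linear_combination h - this
  rcases mul_eq_zero.mp hzero with h | h
  · exact sub_eq_zero.mp h
  · exact absurd ⟨z - w, by rw [div_eq_iff ha]; linear_combination -h⟩ hsq

variable [Finite F]

theorem ncard_cubic_sub_linear_eq_one_iff (ha : a ≠ 0) (hb : b ≠ 0) (e : F) :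
    {z : F | a * z ^ 3 - b * z = e}.ncard = 1 ↔ ¬IsSquare (b / a) := by
  constructor
  · rintro hone ⟨s, hs⟩
    obtain ⟨z, hz⟩ := Set.ncard_eq_one.mp hone
    have hs0 : s ≠ 0 := by rintro rfl; simp [ha, hb] at hs
    have hzs : z + s ∈ {z : F | a * z ^ 3 - b * z = e} := by
      have hz' : z ∈ {z : F | a * z ^ 3 - b * z = e} := by rw [hz]; exact Set.mem_singleton z
      rw [div_eq_iff ha] at hs
      simp only [Set.mem_ofPred_eq, cubic_sub_linear_add] at hz' ⊢
      linear_combination hz' - s * hs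
    rw [hz, Set.mem_singleton_iff, add_eq_left] at hzs
    exact hs0 hzs
  · intro hsq
    have hbij := (cubic_sub_linear_injective ha hsq).bijective_of_finite
    obtain ⟨z, hz⟩ := hbij.2 e
    exact Set.ncard_eq_one.mpr
      ⟨z, Set.ext fun w => ⟨fun hw => hbij.1 (hw.trans hz.symm), fun hw => hw ▸ hz⟩⟩

end CubicSubLinear

section Cubic

variable {F : Type*} [Field F] [CharP F 3] (μ : F) {c : F}

theorem cubic_inv_sub_inv (hc : c ≠ 0) {z : F} (hz : z ≠ 0) :
    c ^ 3 * z ^ 3 * ((z⁻¹ - c⁻¹) ^ 3 + c * (z⁻¹ - c⁻¹) ^ 2 - (z⁻¹ - c⁻¹) - μ * c)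
      = c ^ 3 + c ^ 4 * z - (μ * c ^ 4 + c ^ 2 + 1) * z ^ 3 := by
  have hw : c * z * (z⁻¹ - c⁻¹) = c - z := by field_simp
  calc _ = (c * z * (z⁻¹ - c⁻¹)) ^ 3 + c ^ 2 * z * (c * z * (z⁻¹ - c⁻¹)) ^ 2
        - c ^ 2 * z ^ 2 * (c * z * (z⁻¹ - c⁻¹)) - μ * c ^ 4 * z ^ 3 := by ring
    _ = _ := by
      rw [hw]
      linear_combination (-c ^ 2 * z + c * z ^ 2 - c ^ 3 * z ^ 2 + c ^ 2 * z ^ 3) *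
        CharP.ofNat_eq_zero F 3

theorem cubic_neg_inv (hc : c ≠ 0) :
    c ^ 3 * ((-c⁻¹) ^ 3 + c * (-c⁻¹) ^ 2 - -c⁻¹ - μ * c) = -(μ * c ^ 4 + c ^ 2 + 1) := by
  field_simp
  linear_combination c ^ 2 * CharP.ofNat_eq_zero F 3

theorem cubic_eq_of_disc_eq_zero (hc : c ≠ 0) (hD : μ * c ^ 4 + c ^ 2 + 1 = 0) (t : F) :
    t ^ 3 + c * t ^ 2 - t - μ * c = (t + c⁻¹) ^ 2 * (t + c + c⁻¹) := by
  field_simp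
  linear_combination -hD - (c * t + c ^ 2 * t ^ 2 + c ^ 3 * t) * CharP.ofNat_eq_zero F 3

theorem roots_eq_pair_of_disc_eq_zero (hc : c ≠ 0) (hD : μ * c ^ 4 + c ^ 2 + 1 = 0) :
    {t : F | t ^ 3 + c * t ^ 2 - t - μ * c = 0} = {-c⁻¹, -c⁻¹ - c} := by
  ext t
  simp only [Set.mem_ofPred_eq, cubic_eq_of_disc_eq_zero μ hc hD, mul_eq_zero,
    pow_eq_zero_iff two_ne_zero, Set.mem_insert_iff, Set.mem_singleton_iff, add_eq_zero_iff_eq_neg,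
    eq_sub_iff_add_eq]

theorem image_inv_sub_inv_eq_roots (hc : c ≠ 0) (hD : μ * c ^ 4 + c ^ 2 + 1 ≠ 0) :
    (fun z => z⁻¹ - c⁻¹) '' {z : F | (μ * c ^ 4 + c ^ 2 + 1) * z ^ 3 - c ^ 4 * z = c ^ 3}
      = {t : F | t ^ 3 + c * t ^ 2 - t - μ * c = 0} := by
  ext t
  constructor
  · rintro ⟨z, hz, rfl⟩
    rw [Set.mem_ofPred_eq] at hz
    have hz0 : z ≠ 0 := by rintro rfl; exact pow_ne_zero 3 hc (by simpa using hz.symm)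
    have h := cubic_inv_sub_inv μ hc hz0
    exact (mul_eq_zero.mp (by linear_combination h - hz)).resolve_left
      (mul_ne_zero (pow_ne_zero 3 hc) (pow_ne_zero 3 hz0))
  · intro ht
    rw [Set.mem_ofPred_eq] at ht
    have htc : t + c⁻¹ ≠ 0 := by
      rintro h
      rw [add_eq_zero_iff_eq_neg.mp h] at ht
      exact hD (by linear_combination cubic_neg_inv μ hc - c ^ 3 * ht)
    refine ⟨(t + c⁻¹)⁻¹, ?_, by simp⟩
    have h := cubic_inv_sub_inv μ hc (inv_ne_zero htc)
    rw [inv_inv, add_sub_cancel_right] at h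
    exact show _ = _ by linear_combination h - c ^ 3 * (t + c⁻¹)⁻¹ ^ 3 * ht

theorem ncard_roots_eq_ncard_cubic_sub_linear (hc : c ≠ 0) (hD : μ * c ^ 4 + c ^ 2 + 1 ≠ 0) :
    {t : F | t ^ 3 + c * t ^ 2 - t - μ * c = 0}.ncard
      = {z : F | (μ * c ^ 4 + c ^ 2 + 1) * z ^ 3 - c ^ 4 * z = c ^ 3}.ncard := by
  rw [← image_inv_sub_inv_eq_roots μ hc hD,
    Set.ncard_image_of_injective _ fun x y h => inv_injective (sub_left_injective h)]

theorem ncard_roots_eq_one_iff [Finite F] (hc : c ≠ 0) :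
    {t : F | t ^ 3 + c * t ^ 2 - t - μ * c = 0}.ncard = 1 ↔
      μ * c ^ 4 + c ^ 2 + 1 ≠ 0 ∧ quadChar F (c ^ 4 / (μ * c ^ 4 + c ^ 2 + 1)) = -1 := by
  rw [quadChar_eq_neg_one_iff]
  by_cases hD : μ * c ^ 4 + c ^ 2 + 1 = 0
  · have hne : -c⁻¹ ≠ -c⁻¹ - c := fun h => hc (by linear_combination h)
    simp [roots_eq_pair_of_disc_eq_zero μ hc hD, Set.ncard_pair hne, hD]
  · rw [ncard_roots_eq_ncard_cubic_sub_linear μ hc hD,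
      ncard_cubic_sub_linear_eq_one_iff hD (pow_ne_zero 4 hc)]
    simp [hD]

end Cubic

theorem stmt16_general (n : ℕ)
    (F : Type*) [Field F] [Fintype F] (hcard : Fintype.card F = 3 ^ n)
    (μ : F) :
    Set.ncard {c : F | c ≠ 0 ∧
        ({t : F | t ^ 3 + c * t ^ 2 - t - μ * c = 0} : Set F).ncard = 1}
      = Set.ncard {c : F | c ≠ 0 ∧ μ * c ^ 4 + c ^ 2 + 1 ≠ 0 ∧
          quadChar F (c ^ 4 / (μ * c ^ 4 + c ^ 2 + 1)) = -1} := by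
  have : CharP F 3 := charP_of_card_eq_prime_pow hcard
  congr 1
  ext c
  exact and_congr_right fun hc => ncard_roots_eq_one_iff μ hc

/-- Let `q ≥ 9` be a power of `3` and `μ ∈ F_q^*`, `μ ≠ 1`. Then the
number of `c ∈ F_q^*` such that `t³ + ct² - t - μc` has exactly one root in `F_q` equals
the number of `c ∈ F_q^*` with `μc⁴ + c² + 1 ≠ 0` and `η(c⁴ / (μc⁴ + c² + 1)) = -1`. -/
theorem stmt16 (n : ℕ) (hn : 2 ≤ n)
    (F : Type*) [Field F] [Fintype F] (hcard : Fintype.card F = 3 ^ n)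
    (μ : F) (hμ0 : μ ≠ 0) (hμ1 : μ ≠ 1) :
    Set.ncard {c : F | c ≠ 0 ∧
        ({t : F | t ^ 3 + c * t ^ 2 - t - μ * c = 0} : Set F).ncard = 1}
      = Set.ncard {c : F | c ≠ 0 ∧ μ * c ^ 4 + c ^ 2 + 1 ≠ 0 ∧
          quadChar F (c ^ 4 / (μ * c ^ 4 + c ^ 2 + 1)) = -1} :=
  stmt16_general n F hcard μ
end
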